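/- Let X_1, …, X_N be Polish spaces and let μ_i be a Borel probability measure on X_i with compact support, for i = 1,…,N. Let c : X_1 × ⋯ × X_N → ℝ ∪ {+∞} be continuous. If γ ∈ Π(μ_1,…,μ_N) is an infinitely cyclically monotone plan for c, then γ is optimal for the L^∞ transport problem, i.e. it minimizes C_∞[γ'] = γ'-esssup c over γ' ∈ Π(μ_1,…,μ_N). -/

import Mathlib

open MeasureTheory TopologicalSpace

/-- A set `Γ` is infinitely `c`-cyclically monotone (multimarginal sense): permuting the
coordinates (other than the first) of any finite family of points of `Γ` does not
decrease the maximal cost. -/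
def InfinitelyCCyclicallyMonotone {N : ℕ} {X : Fin (N + 1) → Type*}
    (c : (∀ j, X j) → EReal) (Γ : Set (∀ j, X j)) : Prop :=
  ∀ (k : ℕ) (p : Fin k → ∀ j, X j), (∀ i, p i ∈ Γ) →
    ∀ σ : Fin (N + 1) → Equiv.Perm (Fin k), σ 0 = 1 →
      ⨆ i, c (p i) ≤ ⨆ i, c (fun j => p (σ j i) j)

/-!
Suppose `essSup c γ' < t < essSup c γ`. Cut each compact `K i` into finitely many measurable
cells, so fine that (by uniform continuity of `c` on `∏ K i`) every product cell charged by `γ'`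
lies in `{c < t}`. The cell masses of `γ` and of `γ'` are nonnegative reals with the same marginal
sums; a `ℚ`-linear map `ℝ → ℚ` close to the identity on these finitely many numbers preserves
every linear relation among them, so after clearing denominators they become integer weights with
the same supports and the same marginal sums. Take every `γ`-charged cell as many times as its
weight, with a point of `Γ` in it, one of them of cost `> t`. Since the marginal counts agree,
each coordinate can be permuted separately so that every rearranged point lies in a
`γ'`-charged cell, where `c < t`: this contradicts infinite cyclical monotonicity.
-/

theorem exists_rat_linearMap_near {ι : Type*} [Fintype ι] (x : ι → ℝ) {ε : ι → ℝ}
    (hε : ∀ i, 0 < ε i) : ∃ ℓ : ℝ →ₗ[ℚ] ℚ, ∀ i, |(ℓ (x i) : ℝ) - x i| < ε i := by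
  let V := Submodule.span ℚ (Set.range x)
  have : FiniteDimensional ℚ V := FiniteDimensional.span_of_finite ℚ (Set.finite_range x)
  let b := Module.finBasis ℚ V
  let xV : ι → V := fun i => ⟨x i, Submodule.subset_span (Set.mem_range_self i)⟩
  let Φ : (Fin (Module.finrank ℚ V) → ℝ) → ι → ℝ := fun g i => ∑ k, (b.repr (xV i) k : ℝ) * g k
  have hΦb : Φ (fun k => (b k : ℝ)) = x := by
    funext i
    have := congr_arg ((↑) : V → ℝ) (b.sum_repr (xV i))
    rw [Submodule.coe_sum] at this
    simpa only [Submodule.coe_smul, Rat.smul_def] using this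
  have hopen : IsOpen {g | ∀ i, |Φ g i - x i| < ε i} := by
    simp only [Set.ofPred_forall]
    exact isOpen_iInter_of_finite fun i => isOpen_lt (by fun_prop) continuous_const
  obtain ⟨q, hq⟩ := (DenseRange.piMap fun _ => Rat.denseRange_cast).exists_mem_open hopen
    ⟨fun k => (b k : ℝ), fun i => by simp [hΦb, hε i]⟩
  obtain ⟨ℓ, hℓ⟩ := LinearMap.exists_extend (b.constr ℚ q)
  refine ⟨ℓ, fun i => ?_⟩
  have hℓx : ℓ (x i) = ∑ k, b.repr (xV i) k * q k := by
    rw [show x i = V.subtype (xV i) from rfl, ← LinearMap.comp_apply, hℓ,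
      b.constr_apply_fintype ℚ]
    simp
  simpa [hℓx, Φ] using hq i

theorem exists_common_denominator_of_nonneg {ι : Type*} [Fintype ι] {q : ι → ℚ}
    (hq : ∀ i, 0 ≤ q i) :
    ∃ D : ℕ, 0 < D ∧ ∃ w : ι → ℕ, ∀ i, (w i : ℚ) = D * q i := by
  refine ⟨∏ i, (q i).den, Finset.prod_pos fun i _ => (q i).den_pos, ?_⟩
  have h (i : ι) : ∃ k : ℕ, (k : ℚ) = (∏ i, (q i).den : ℕ) * q i := by
    obtain ⟨k, hk⟩ := Finset.dvd_prod_of_mem (fun i => (q i).den) (Finset.mem_univ i)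
    refine ⟨k * (q i).num.toNat, ?_⟩
    have hnum : ((q i).num.toNat : ℚ) = q i * (q i).den := by
      rw [← Int.cast_natCast, Int.toNat_of_nonneg (Rat.num_nonneg.2 (hq i)), Rat.mul_den_eq_num]
    rw [hk, Nat.cast_mul, Nat.cast_mul, hnum]
    ring
  choose w hw using h
  exact ⟨w, hw⟩

theorem exists_nat_preserving_zero_and_sum_eq {ι : Type*} [Fintype ι] {x : ι → ℝ}
    (hx : ∀ i, 0 ≤ x i) :
    ∃ w : ι → ℕ, (∀ i, w i = 0 ↔ x i = 0) ∧
      ∀ s t : Finset ι, ∑ i ∈ s, x i = ∑ i ∈ t, x i → ∑ i ∈ s, w i = ∑ i ∈ t, w i := by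
  obtain ⟨ℓ, hℓ⟩ := exists_rat_linearMap_near x (ε := fun i => if x i = 0 then 1 else x i)
    fun i => by split_ifs with h; exacts [one_pos, (hx i).lt_of_ne' h]
  have hℓpos (i : ι) (hi : x i ≠ 0) : 0 < ℓ (x i) := by
    have := hℓ i
    rw [if_neg hi] at this
    exact_mod_cast (by linarith [neg_abs_le ((ℓ (x i) : ℝ) - x i)] : (0 : ℝ) < ℓ (x i))
  have hℓzero (i : ι) : ℓ (x i) = 0 ↔ x i = 0 :=
    ⟨fun h => by_contra fun hi => (hℓpos i hi).ne' h, fun h => by rw [h, map_zero]⟩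
  obtain ⟨D, hD, w, hw⟩ := exists_common_denominator_of_nonneg (q := fun i => ℓ (x i)) fun i =>
    (eq_or_ne (x i) 0).elim (fun h => ((hℓzero i).2 h).ge) fun h => (hℓpos i h).le
  refine ⟨w, fun i => ?_, fun s t hst => ?_⟩
  · rw [← hℓzero, ← Nat.cast_eq_zero (R := ℚ), hw]
    simp [hD.ne']
  · have hℓst := congr_arg ℓ hst
    rw [map_sum, map_sum] at hℓst
    have : ∑ i ∈ s, (w i : ℚ) = ∑ i ∈ t, (w i : ℚ) := by
      simp only [hw, ← Finset.mul_sum, hℓst]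
    exact_mod_cast this

theorem exists_nat_fiber_sum_eq {F J : Type*} [Fintype F] {κ : J → Type*}
    [∀ j, DecidableEq (κ j)] (g : ∀ j, F → κ j) {a b : F → ℝ} (ha : ∀ f, 0 ≤ a f)
    (hb : ∀ f, 0 ≤ b f) (hab : ∀ j m, ∑ f with g j f = m, a f = ∑ f with g j f = m, b f) :
    ∃ wa wb : F → ℕ, (∀ f, wa f = 0 ↔ a f = 0) ∧ (∀ f, wb f = 0 ↔ b f = 0) ∧
      ∀ j m, ∑ f with g j f = m, wa f = ∑ f with g j f = m, wb f := by
  obtain ⟨w, hw0, hw⟩ := exists_nat_preserving_zero_and_sum_eq (x := Sum.elim a b)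
    (by rintro (f | f) <;> simp [ha, hb])
  refine ⟨w ∘ Sum.inl, w ∘ Sum.inr, fun f => hw0 (.inl f), fun f => hw0 (.inr f), fun j m => ?_⟩
  let fiber := Finset.univ.filter (g j · = m)
  simpa [Finset.sum_disjSum] using
    hw (fiber.disjSum ∅) (Finset.disjSum ∅ fiber) (by simpa [Finset.sum_disjSum] using hab j m)

theorem exists_sigma_fin_equiv_of_fiber_sum_eq {F κ : Type*} [Fintype F] [DecidableEq κ]
    (g : F → κ) {w₁ w₂ : F → ℕ} (h : ∀ m, ∑ f with g f = m, w₁ f = ∑ f with g f = m, w₂ f) :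
    ∃ τ : (Σ f, Fin (w₁ f)) ≃ (Σ f, Fin (w₂ f)), ∀ y, g (τ y).1 = g y.1 := by
  have hcard (w : F → ℕ) (m : κ) :
      Fintype.card {y : Σ f, Fin (w f) // g y.1 = m} = ∑ f with g f = m, w f := by
    rw [Fintype.card_congr (Equiv.subtypeSigmaEquiv _ fun f => g f = m), Fintype.card_sigma]
    simpa using (Finset.sum_subtype _ (fun _ => Finset.mem_filter_univ _) w).symm
  exact ⟨_, Equiv.ofFiberEquiv_map (f := fun y : Σ f, Fin (w₁ f) => g y.1)
    (g := fun y : Σ f, Fin (w₂ f) => g y.1)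
    fun m => Fintype.equivOfCardEq (by rw [hcard, hcard, h])⟩

theorem exists_measurable_fin_dist_lt {X : Type*} [PseudoMetricSpace X] [SeparableSpace X]
    [MeasurableSpace X] [OpensMeasurableSpace X] {K : Set X} (hK : IsCompact K)
    {δ : ℝ} (hδ : 0 < δ) :
    ∃ (n : ℕ) (π : X → Fin n), Measurable π ∧ ∀ x ∈ K, ∀ y ∈ K, π x = π y → dist x y < δ := by
  cases isEmpty_or_nonempty X
  · exact ⟨0, isEmptyElim, Subsingleton.measurable, fun x => isEmptyElim x⟩
  set e := denseSeq X
  obtain ⟨N, hN⟩ : ∃ N, K ⊆ ⋃ k ≤ N, Metric.ball (e k) (δ / 2) := by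
    refine hK.elim_directed_cover _ (fun N => isOpen_biUnion fun _ _ => Metric.isOpen_ball)
      (fun x _ => ?_) (Monotone.directed_le fun a b hab =>
        Set.biUnion_subset_biUnion_left fun k hk => le_trans hk hab)
    obtain ⟨k, hk⟩ := (denseRange_denseSeq X).exists_dist_lt x (half_pos hδ)
    exact Set.mem_iUnion.2 ⟨k, Set.mem_iUnion₂.2 ⟨k, le_rfl, Metric.mem_ball.2 hk⟩⟩
  let ind := SimpleFunc.nearestPtInd e N
  have hnear (z : X) (hz : z ∈ K) : dist (e (ind z)) z < δ / 2 := by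
    obtain ⟨k, hk, hzk⟩ := Set.mem_iUnion₂.1 (hN hz)
    have h := SimpleFunc.edist_nearestPt_le e z hk
    rw [edist_dist, edist_dist, ENNReal.ofReal_le_ofReal_iff dist_nonneg] at h
    exact h.trans_lt (Metric.mem_ball'.1 hzk)
  refine ⟨N + 1, fun x => ⟨ind x, Nat.lt_succ_of_le (SimpleFunc.nearestPtInd_le e N x)⟩,
    measurable_to_countable' fun m => ?_, fun x hx y hy hxy => ?_⟩
  · convert ind.measurableSet_preimage {(m : ℕ)} using 1
    ext x
    simp [Fin.ext_iff]
  · have hind : ind x = ind y := congr_arg Fin.val hxy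
    calc dist x y ≤ dist (e (ind x)) x + dist (e (ind y)) y := by
          rw [hind]; exact dist_triangle_left _ _ _
      _ < δ / 2 + δ / 2 := add_lt_add (hnear x hx) (hnear y hy)
      _ = δ := add_halves δ

theorem exists_pi_fin_partition_subset_open {ι : Type*} [Fintype ι] {X : ι → Type*}
    [∀ i, PseudoMetricSpace (X i)] [∀ i, SeparableSpace (X i)] [∀ i, MeasurableSpace (X i)]
    [∀ i, OpensMeasurableSpace (X i)] {K : ∀ i, Set (X i)} (hK : ∀ i, IsCompact (K i))
    {C U : Set (∀ i, X i)} (hC : IsCompact C) (hU : IsOpen U) (hCK : C ⊆ Set.univ.pi K)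
    (hCU : C ⊆ U) :
    ∃ (n : ι → ℕ) (π : ∀ i, X i → Fin (n i)), (∀ i, Measurable (π i)) ∧
      ∀ z ∈ Set.univ.pi K, ∀ v ∈ C, Pi.map π z = Pi.map π v → z ∈ U := by
  obtain ⟨δ, hδ, hδU⟩ := hC.exists_thickening_subset_open hU hCU
  choose n π hπ hπδ using fun i => exists_measurable_fin_dist_lt (hK i) hδ
  refine ⟨n, π, hπ, fun z hz v hv hzv => hδU (Metric.mem_thickening_iff.2 ⟨v, hv, ?_⟩)⟩
  exact (dist_pi_lt_iff hδ).2 fun i =>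
    hπδ i _ (hz i trivial) _ (hCK hv i trivial) (congr_fun hzv i)

theorem nonempty_inter_of_measure_ne_zero_of_measure_eq_one {α : Type*} [MeasurableSpace α]
    {μ : Measure α} [IsProbabilityMeasure μ] {s t : Set α} (hs : MeasurableSet s)
    (hs0 : μ s ≠ 0) (ht : μ t = 1) : (s ∩ t).Nonempty :=
  nonempty_inter_of_measure_lt_add' μ hs (Set.subset_univ _) (Set.subset_univ _) <| by
    rw [measure_univ, ht, add_comm]
    exact ENNReal.lt_add_right ENNReal.one_ne_top hs0

theorem ae_measure_preimage_singleton_ne_zero {α β : Type*} [MeasurableSpace α] [Countable β]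
    (μ : Measure α) (f : α → β) : ∀ᵐ x ∂μ, μ (f ⁻¹' {f x}) ≠ 0 := by
  have hnull : μ (f ⁻¹' {y | μ (f ⁻¹' {y}) = 0}) = 0 :=
    (measure_preimage_eq_zero_iff_of_countable (Set.to_countable _)).2 fun _ hy => hy
  exact ae_iff.2 (measure_mono_null (fun x hx => not_not.1 hx) hnull)

theorem ae_mem_univ_pi_of_ae_map {ι : Type*} [Countable ι] {X : ι → Type*}
    [∀ i, MeasurableSpace (X i)] {ν : Measure (∀ i, X i)} {K : ∀ i, Set (X i)}
    (hK : ∀ i, ∀ᵐ y ∂ν.map (fun x => x i), y ∈ K i) : ∀ᵐ x ∂ν, x ∈ Set.univ.pi K := by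
  simpa [Set.mem_univ_pi] using
    ae_all_iff.2 fun i => ae_of_ae_map (measurable_pi_apply i).aemeasurable (hK i)

theorem measurable_piMap {ι : Type*} {X Y : ι → Type*} [∀ i, MeasurableSpace (X i)]
    [∀ i, MeasurableSpace (Y i)] {π : ∀ i, X i → Y i} (hπ : ∀ i, Measurable (π i)) :
    Measurable (Pi.map π) :=
  measurable_pi_lambda _ fun i => (hπ i).comp (measurable_pi_apply i)

theorem sum_measureReal_piMap_preimage_singleton {ι : Type*} [Fintype ι] [DecidableEq ι]
    {X : ι → Type*} [∀ i, MeasurableSpace (X i)] {n : ι → ℕ} {π : ∀ i, X i → Fin (n i)}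
    (hπ : ∀ i, Measurable (π i))
    (ν : Measure (∀ i, X i)) [IsFiniteMeasure ν] (i : ι) (m : Fin (n i)) :
    ∑ f with f i = m, ν.real (Pi.map π ⁻¹' {f}) = (ν.map (fun x => x i)).real (π i ⁻¹' {m}) := by
  rw [sum_measureReal_preimage_singleton _
      fun f _ => measurable_piMap hπ (measurableSet_singleton f),
    map_measureReal_apply (measurable_pi_apply i) (hπ i (measurableSet_singleton m))]
  congr 1
  ext x
  simp [Pi.map]

namespace InfinitelyCCyclicallyMonotone

variable {N : ℕ} {X : Fin (N + 1) → Type*} {c : (∀ j, X j) → EReal} {Γ : Set (∀ j, X j)}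

theorem mono (h : InfinitelyCCyclicallyMonotone c Γ) {Γ' : Set (∀ j, X j)} (hΓ' : Γ' ⊆ Γ) :
    InfinitelyCCyclicallyMonotone c Γ' :=
  fun k p hp => h k p fun i => hΓ' (hp i)

theorem iSup_le_iSup_comp_equiv (h : InfinitelyCCyclicallyMonotone c Γ) {ι κ : Type*} [Fintype ι]
    {p : ι → ∀ j, X j} (hp : ∀ i, p i ∈ Γ) (τ : Fin (N + 1) → κ ≃ ι) :
    ⨆ i, c (p i) ≤ ⨆ y, c (fun j => p (τ j y) j) := by
  let e := Fintype.equivFin ι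
  have key := h _ (p ∘ e.symm) (fun i => hp _)
    (fun j => e.symm.trans ((τ 0).symm.trans ((τ j).trans e))) (by ext; simp)
  rw [← e.symm.iSup_comp, ← (e.symm.trans (τ 0).symm).iSup_comp]
  simpa using key

theorem cost_le_of_fiber_sum_eq (h : InfinitelyCCyclicallyMonotone c Γ) {F : Type*} [Fintype F]
    {κ : Fin (N + 1) → Type*} [∀ j, DecidableEq (κ j)] (g : ∀ j, F → κ j) {a b : F → ℝ}
    (ha : ∀ f, 0 ≤ a f) (hb : ∀ f, 0 ≤ b f)
    (hab : ∀ j m, ∑ f with g j f = m, a f = ∑ f with g j f = m, b f)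
    {u : F → ∀ j, X j} (hu : ∀ f, a f ≠ 0 → u f ∈ Γ) {t : EReal}
    (ht : ∀ f, b f ≠ 0 → ∀ f' : Fin (N + 1) → F, (∀ j, a (f' j) ≠ 0 ∧ g j (f' j) = g j f) →
      c (fun j => u (f' j) j) ≤ t)
    {f₀ : F} (hf₀ : a f₀ ≠ 0) : c (u f₀) ≤ t := by
  obtain ⟨wa, wb, hwa, hwb, hw⟩ := exists_nat_fiber_sum_eq g ha hb hab
  choose τ hτ using fun j => exists_sigma_fin_equiv_of_fiber_sum_eq (g j) fun m => (hw j m).symm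
  have hposa {f} (i : Fin (wa f)) : a f ≠ 0 := fun h0 => i.pos.ne' ((hwa f).2 h0)
  have hposb {f} (i : Fin (wb f)) : b f ≠ 0 := fun h0 => i.pos.ne' ((hwb f).2 h0)
  calc c (u f₀) ≤ ⨆ y : Σ f, Fin (wa f), c (u y.1) :=
        le_iSup (fun y : Σ f, Fin (wa f) => c (u y.1))
          ⟨f₀, 0, Nat.pos_of_ne_zero fun h0 => hf₀ ((hwa f₀).1 h0)⟩
    _ ≤ ⨆ y : Σ f, Fin (wb f), c (fun j => u (τ j y).1 j) :=
        h.iSup_le_iSup_comp_equiv (fun y => hu _ (hposa y.2)) τ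
    _ ≤ t := iSup_le fun y =>
        ht y.1 (hposb y.2) (fun j => (τ j y).1) fun j => ⟨hposa (τ j y).2, hτ j y⟩

variable [∀ j, MeasurableSpace (X j)] {n : Fin (N + 1) → ℕ} {π : ∀ j, X j → Fin (n j)}
  {γ γ' : Measure (∀ j, X j)} [IsProbabilityMeasure γ] [IsFiniteMeasure γ'] {K : ∀ j, Set (X j)}
  {t : EReal}

theorem cost_le_of_measure_cell_ne_zero (h : InfinitelyCCyclicallyMonotone c Γ)
    (hπ : ∀ j, Measurable (π j)) (hΓ1 : γ Γ = 1)
    (hmarg : ∀ j, γ.map (fun x => x j) = γ'.map (fun x => x j)) (hΓK : Γ ⊆ Set.univ.pi K)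
    (ht : ∀ z ∈ Set.univ.pi K, γ' (Pi.map π ⁻¹' {Pi.map π z}) ≠ 0 → c z ≤ t)
    {x : ∀ j, X j} (hx : x ∈ Γ) (hxγ : γ (Pi.map π ⁻¹' {Pi.map π x}) ≠ 0) : c x ≤ t := by
  have hrep (f : ∀ j, Fin (n j)) : ∃ y, γ (Pi.map π ⁻¹' {f}) ≠ 0 → y ∈ Γ ∧ Pi.map π y = f := by
    by_cases hf : γ (Pi.map π ⁻¹' {f}) = 0
    · exact ⟨x, fun h => (h hf).elim⟩
    · obtain ⟨y, hyf, hyΓ⟩ := nonempty_inter_of_measure_ne_zero_of_measure_eq_one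
        (measurable_piMap hπ (measurableSet_singleton f)) hf hΓ1
      exact ⟨y, fun _ => ⟨hyΓ, hyf⟩⟩
  choose u₀ hu₀ using hrep
  set u := Function.update u₀ (Pi.map π x) x
  have hu (f) (hf : γ.real (Pi.map π ⁻¹' {f}) ≠ 0) : u f ∈ Γ ∧ Pi.map π (u f) = f := by
    rw [Ne, measureReal_eq_zero_iff] at hf
    rcases eq_or_ne f (Pi.map π x) with rfl | hfx
    · simp [u, hx]
    · simpa [u, Function.update_of_ne hfx] using hu₀ f hf
  have hmix (f) (hf : γ'.real (Pi.map π ⁻¹' {f}) ≠ 0) (f' : Fin (N + 1) → ∀ j, Fin (n j))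
      (hf' : ∀ j, γ.real (Pi.map π ⁻¹' {f' j}) ≠ 0 ∧ f' j j = f j) :
      c (fun j => u (f' j) j) ≤ t := by
    have hcell : Pi.map π (fun j => u (f' j) j) = f := funext fun j => by
      rw [← (hf' j).2]
      exact congr_fun (hu _ (hf' j).1).2 j
    refine ht _ (fun j _ => hΓK (hu _ (hf' j).1).1 j trivial) ?_
    rwa [hcell, ← measureReal_ne_zero_iff]
  simpa [u] using h.cost_le_of_fiber_sum_eq (fun j f => f j) (fun _ => measureReal_nonneg)
    (fun _ => measureReal_nonneg)
    (fun j m => by simp only [sum_measureReal_piMap_preimage_singleton hπ, hmarg])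
    (fun f hf => (hu f hf).1) hmix (f₀ := Pi.map π x) (by rwa [Ne, measureReal_eq_zero_iff])

theorem essSup_le (h : InfinitelyCCyclicallyMonotone c Γ) (hc : Measurable c)
    (hπ : ∀ j, Measurable (π j)) (hΓ1 : γ Γ = 1)
    (hmarg : ∀ j, γ.map (fun x => x j) = γ'.map (fun x => x j))
    (hK : ∀ᵐ x ∂γ, x ∈ Set.univ.pi K)
    (ht : ∀ z ∈ Set.univ.pi K, γ' (Pi.map π ⁻¹' {Pi.map π z}) ≠ 0 → c z ≤ t) :
    essSup c γ ≤ t := by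
  have hΓK : γ (Γ ∩ Set.univ.pi K) = 1 := (measure_inter_conull (t := Set.univ.pi K) hK).trans hΓ1
  let S := {x | γ (Pi.map π ⁻¹' {Pi.map π x}) ≠ 0 → c x ≤ t}
  have hS : MeasurableSet S := by
    refine measurableSet_setOfPred.2 (Measurable.imp ?_ (measurableSet_le hc measurable_const).mem)
    exact (Measurable.of_discrete (f := fun f : ∀ j, Fin (n j) => γ (Pi.map π ⁻¹' {f}) ≠ 0)).comp
      (measurable_piMap hπ)
  have hΓS : Γ ∩ Set.univ.pi K ⊆ S := fun x hx =>
    (h.mono Set.inter_subset_left).cost_le_of_measure_cell_ne_zero hπ hΓK hmarg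
      Set.inter_subset_right ht hx
  have hSae : ∀ᵐ x ∂γ, x ∈ S :=
    ae_iff.2 <| (prob_compl_eq_zero_iff hS).2 <|
      le_antisymm prob_le_one (hΓK ▸ measure_mono hΓS)
  refine essSup_le_of_ae_le t ?_
  filter_upwards [hSae, ae_measure_preimage_singleton_ne_zero γ (Pi.map π)] with x hxS hx
  exact hxS hx

end InfinitelyCCyclicallyMonotone

/-- **De Pascale–Kausamo.** On Polish spaces, for a continuous cost
`c : X₁ × ⋯ × X_N → ℝ ∪ {+∞}` and marginals with compact support, every infinitely
cyclically monotone plan is optimal for the `L^∞` transport problem (it minimizes the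
`γ`-essential supremum of `c` among all couplings of the given marginals). -/
theorem infinitelyCCyclicallyMonotone_implies_Linfty_optimal
    {N : ℕ} {X : Fin (N + 1) → Type*}
    [∀ i, TopologicalSpace (X i)] [∀ i, PolishSpace (X i)]
    [∀ i, MeasurableSpace (X i)] [∀ i, BorelSpace (X i)]
    (μ : ∀ i, Measure (X i)) [∀ i, IsProbabilityMeasure (μ i)]
    (hcompact : ∀ i, ∃ K : Set (X i), IsCompact K ∧ μ i K = 1)
    (c : (∀ i, X i) → EReal) (hc : Continuous c)
    (γ : Measure (∀ i, X i))
    (hγ : ∀ i, γ.map (fun x => x i) = μ i)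
    (hmono : ∃ Γ : Set (∀ i, X i), InfinitelyCCyclicallyMonotone c Γ ∧ γ Γ = 1) :
    ∀ γ' : Measure (∀ i, X i), (∀ i, γ'.map (fun x => x i) = μ i) →
      essSup c γ ≤ essSup c γ' := by
  intro γ' hγ'
  have hprob (ν : Measure (∀ i, X i)) (hν : ∀ i, ν.map (fun x => x i) = μ i) :
      IsProbabilityMeasure ν :=
    have : IsProbabilityMeasure (ν.map fun x => x 0) := hν 0 ▸ inferInstance
    Measure.isProbabilityMeasure_of_map (fun x => x 0)
  have := hprob γ hγ
  have := hprob γ' hγ'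
  let := fun i => upgradeIsCompletelyMetrizable (X i)
  choose K hK hK1 using hcompact
  have hKae (ν : Measure (∀ i, X i)) (hν : ∀ i, ν.map (fun x => x i) = μ i) :
      ∀ᵐ x ∂ν, x ∈ Set.univ.pi K := ae_mem_univ_pi_of_ae_map fun i => by
    rw [hν i]
    exact ae_iff.2 ((prob_compl_eq_zero_iff (hK i).isClosed.measurableSet).2 (hK1 i))
  obtain ⟨Γ, hΓ, hΓ1⟩ := hmono
  refine le_of_forall_gt_imp_ge_of_dense fun t ht => ?_
  obtain ⟨n, π, hπ, hπt⟩ := exists_pi_fin_partition_subset_open hK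
    ((isCompact_univ_pi hK).inter_right (isClosed_Iic.preimage hc)) (isOpen_Iio.preimage hc)
    Set.inter_subset_left fun v hv => lt_of_le_of_lt hv.2 ht
  refine hΓ.essSup_le (γ' := γ') hc.measurable hπ hΓ1 (fun j => by rw [hγ, hγ']) (hKae γ hγ)
    fun z hz hzγ' => ?_
  obtain ⟨v, hv, hvK, hvc⟩ := Measure.exists_mem_of_measure_ne_zero_of_ae hzγ'
    (ae_restrict_of_ae ((hKae γ' hγ').and (ae_le_essSup (f := c))))
  exact (hπt z hz v ⟨hvK, hvc⟩ hv.symm).le
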